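/- Under the stated context, suppose additionally that δ is written as δ = r + s√−c with r, s rational integers (which is possible when −c ≢ 1 (mod 4)), respectively as δ = (r + s√−c)/2 with r ≡ s (mod 2) (when −c ≡ 1 (mod 4)). Then s ≠ 0 and (αᵖ − βᵖ)/(α − β) = d/s in the first case and (αᵖ − βᵖ)/(α − β) = 2d/s in the second case; in particular, s divides d in the first case and s divides 2d in the second case. -/

import Mathlib

open Polynomial IntermediateField

noncomputable def sqrtneg (c : ℕ) : ℂ := Complex.I * Real.sqrt c

lemma sqrtneg_sq (c : ℕ) : sqrtneg c ^ 2 = -(c : ℂ) := by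
  have h : ((Real.sqrt c : ℝ) : ℂ) ^ 2 = (c : ℂ) := by
    rw [← Complex.ofReal_pow, Real.sq_sqrt (by positivity)]
    norm_num
  simp [sqrtneg, mul_pow, Complex.I_sq, h]

lemma sqrtneg_isIntegral (c : ℕ) : IsIntegral ℚ (sqrtneg c) := by
  refine ⟨X ^ 2 + C (c : ℚ), monic_X_pow_add_C _ two_ne_zero, ?_⟩
  simp [eval₂_add, eval₂_pow, sqrtneg_sq c]

/-- The field `K = ℚ(√-c)`, realised as the subfield of `ℂ` generated by `i·√c`. -/
noncomputable def Kf (c : ℕ) : IntermediateField ℚ ℂ := ℚ⟮sqrtneg c⟯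

/-- The class number of `ℚ(√-c)`. -/
noncomputable def classNumberK (c : ℕ) : ℕ :=
  haveI : FiniteDimensional ℚ (Kf c) :=
    IntermediateField.adjoin.finiteDimensional (sqrtneg_isIntegral c)
  haveI : NumberField (Kf c) := ⟨⟩
  NumberField.classNumber (Kf c)

lemma seq_dvd (w wb T : ℂ) (t n v : ℤ) (htr : w + wb = (t : ℂ)) (hn : w * wb = (n : ℂ))
    (hv : w - wb = (v : ℂ) * T) :
    ∀ m : ℕ, ∃ V : ℤ, w ^ m - wb ^ m = (V : ℂ) * T ∧ v ∣ V := by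
  have key : ∀ m : ℕ, (∃ V : ℤ, w ^ m - wb ^ m = (V : ℂ) * T ∧ v ∣ V) ∧
      (∃ V : ℤ, w ^ (m + 1) - wb ^ (m + 1) = (V : ℂ) * T ∧ v ∣ V) := by
    intro m
    induction m with
    | zero => exact ⟨⟨0, by simp, dvd_zero v⟩, ⟨v, by simpa using hv, dvd_rfl⟩⟩
    | succ k ih =>
      obtain ⟨⟨V0, h0, d0⟩, ⟨V1, h1, d1⟩⟩ := ih
      refine ⟨⟨V1, h1, d1⟩, ⟨t * V1 - n * V0, ?_, dvd_sub (d1.mul_left t) (d0.mul_left n)⟩⟩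
      have hrec : w ^ (k + 2) - wb ^ (k + 2)
          = (w + wb) * (w ^ (k + 1) - wb ^ (k + 1)) - (w * wb) * (w ^ k - wb ^ k) := by ring
      rw [hrec, htr, hn, h0, h1]
      push_cast
      ring
  exact fun m => (key m).1

lemma coprime_of_norm (C₁ C₂ x y c p : ℕ) (hC₁sqf : Squarefree C₁)
    (hcop : Nat.gcd C₁ C₂ = 1) (heq : C₁ * x ^ 2 + C₂ = y ^ p) (hp : 0 < p)
    (m r s : ℤ) (hn : r ^ 2 + (c : ℤ) * s ^ 2 = m * ((C₁ : ℤ) * (y : ℤ)))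
    (hms : IsCoprime s m) : IsCoprime s ((C₁ : ℤ)) := by
  rw [Int.isCoprime_iff_gcd_eq_one]
  by_contra hg
  have hq : (Int.gcd s (C₁ : ℤ)).minFac.Prime := Nat.minFac_prime hg
  set q := (Int.gcd s (C₁ : ℤ)).minFac with hqdef
  have hqg : (q : ℤ) ∣ (Int.gcd s (C₁ : ℤ) : ℤ) := Int.natCast_dvd_natCast.mpr (Nat.minFac_dvd _)
  have hqs : (q : ℤ) ∣ s := hqg.trans (Int.gcd_dvd_left _ _)
  have hqC₁ : q ∣ C₁ := by exact_mod_cast hqg.trans (Int.gcd_dvd_right _ _)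
  have hqZ : Prime (q : ℤ) := Nat.prime_iff_prime_int.mp hq
  have hqr : (q : ℤ) ∣ r := by
    refine hqZ.dvd_of_dvd_pow (n := 2) ?_
    have : r ^ 2 = m * ((C₁ : ℤ) * y) - (c : ℤ) * s ^ 2 := by linarith
    rw [this]
    exact dvd_sub (((Int.natCast_dvd_natCast.mpr hqC₁).mul_right (y : ℤ)).mul_left m)
      ((hqs.pow (n := 2) two_ne_zero).mul_left _)
  have hq2 : (q : ℤ) ^ 2 ∣ (C₁ : ℤ) * y := by
    have h4 : (q : ℤ) ^ 2 ∣ m * ((C₁ : ℤ) * y) := by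
      rw [← hn]
      exact dvd_add (pow_dvd_pow_of_dvd hqr 2) ((pow_dvd_pow_of_dvd hqs 2).mul_left _)
    have hcp : IsCoprime ((q : ℤ) ^ 2) m := ((hms.of_isCoprime_of_dvd_left hqs)).pow_left
    exact hcp.dvd_of_dvd_mul_left h4
  have hq2n : q ^ 2 ∣ C₁ * y := by exact_mod_cast hq2
  obtain ⟨C₁', hC₁'⟩ := hqC₁
  have hqC₁' : ¬ q ∣ C₁' := by
    intro h
    exact hq.prime.not_unit (hC₁sqf q (by rw [hC₁']; exact mul_dvd_mul_left q h))
  have hqy : q ∣ y := by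
    have h5 : q * q ∣ q * (C₁' * y) := by
      rw [← mul_assoc, ← hC₁', ← pow_two]; exact hq2n
    have h6 : q ∣ C₁' * y := (mul_dvd_mul_iff_left hq.pos.ne').mp h5
    rcases (Nat.Prime.dvd_mul hq).mp h6 with h | h
    · exact absurd h hqC₁'
    · exact h
  have hqC₂ : q ∣ C₂ := by
    have h7 : q ∣ y ^ p := dvd_pow hqy hp.ne'
    have h8 : q ∣ C₁ * x ^ 2 := ⟨C₁' * x ^ 2, by rw [hC₁']; ring⟩
    have h9 : C₂ = y ^ p - C₁ * x ^ 2 := by omega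
    rw [h9]; exact Nat.dvd_sub h7 h8
  have : q ∣ 1 := hcop ▸ Nat.dvd_gcd ⟨C₁', hC₁'⟩ hqC₂
  exact hq.one_lt.ne' (Nat.dvd_one.mp this)

theorem stmt14 (C₁ C₂ c d : ℕ) (hC₁pos : 0 < C₁) (hC₁sqf : Squarefree C₁)
    (hC₂pos : 0 < C₂) (hcop : Nat.gcd C₁ C₂ = 1) (hmod8 : C₁ * C₂ % 8 ≠ 7)
    (hcpos : 0 < c) (hdpos : 0 < d) (hcsqf : Squarefree c)
    (hfact : C₁ * C₂ = c * d ^ 2)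
    (p : ℕ) (hp : p.Prime) (hpodd : Odd p)
    (hpcl : ¬ p ∣ classNumberK c)
    (hp3 : p = 3 → ¬ ∃ m : ℤ, (C₁ : ℤ) * (C₂ : ℤ) = 3 * m ^ 2)
    (x y : ℕ) (hxpos : 0 < x) (hypos : 0 < y)
    (heq : C₁ * x ^ 2 + C₂ = y ^ p)
    (hgcd : Nat.gcd (Nat.gcd (C₁ * x ^ 2) C₂) (y ^ p) = 1)
    (δ : ℂ) (hδK : δ ∈ Kf c) (hδint : IsIntegral ℤ δ)
    (hδeq : (C₁ : ℂ) ^ ((p - 1) / 2) * ((C₁ : ℂ) * (x : ℂ) + (d : ℂ) * sqrtneg c) = δ ^ p)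
    (α β : ℂ) (hα : α = δ / (Real.sqrt C₁ : ℂ))
    (hβ : β = (starRingEnd ℂ) δ / (Real.sqrt C₁ : ℂ))
    (r s : ℤ) :
    (¬ (-(c : ℤ) ≡ 1 [ZMOD 4]) → δ = (r : ℂ) + (s : ℂ) * sqrtneg c →
      s ≠ 0 ∧ (α ^ p - β ^ p) / (α - β) = (d : ℂ) / (s : ℂ) ∧ s ∣ (d : ℤ)) ∧
    ((-(c : ℤ) ≡ 1 [ZMOD 4]) → (r ≡ s [ZMOD 2]) →
      δ = ((r : ℂ) + (s : ℂ) * sqrtneg c) / 2 →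
      s ≠ 0 ∧ (α ^ p - β ^ p) / (α - β) = 2 * (d : ℂ) / (s : ℂ) ∧ s ∣ 2 * (d : ℤ)) := by
  set T : ℂ := sqrtneg c with hTdef
  have hT2 : T ^ 2 = -(c : ℂ) := sqrtneg_sq c
  have hTne : T ≠ 0 := by
    intro h
    have h0 : -(c : ℂ) = 0 := by rw [← hT2, h]; ring
    have : (c : ℂ) = 0 := by linear_combination -h0
    exact hcpos.ne' (by exact_mod_cast this)
  have hconjT : (starRingEnd ℂ) T = -T := by
    simp [hTdef, sqrtneg, Complex.conj_I]
  have hpodd' := hpodd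
  obtain ⟨k, hk⟩ := hpodd'
  have hk2 : (p - 1) / 2 = k := by omega
  rw [hk2] at hδeq
  have hC₁ne : (C₁ : ℂ) ≠ 0 := Nat.cast_ne_zero.mpr hC₁pos.ne'
  have hC₁k : (C₁ : ℂ) ^ k ≠ 0 := pow_ne_zero _ hC₁ne
  have hdne : (d : ℂ) ≠ 0 := Nat.cast_ne_zero.mpr hdpos.ne'
  have hQ : ((Real.sqrt C₁ : ℝ) : ℂ) ≠ 0 := by
    simp only [ne_eq, Complex.ofReal_eq_zero]
    positivity
  have hQ2 : ((Real.sqrt C₁ : ℝ) : ℂ) ^ 2 = (C₁ : ℂ) := by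
    rw [← Complex.ofReal_pow, Real.sq_sqrt (by positivity)]
    norm_num
  have hQp : ((Real.sqrt C₁ : ℝ) : ℂ) ^ p = (C₁ : ℂ) ^ k * (Real.sqrt C₁ : ℂ) := by
    rw [hk, pow_succ, pow_mul, hQ2]
  have hconjδp : ((starRingEnd ℂ) δ) ^ p = (C₁ : ℂ) ^ k * ((C₁ : ℂ) * x - (d : ℂ) * T) := by
    rw [← map_pow, ← hδeq]
    simp only [map_mul, map_add, map_pow, hconjT, Complex.conj_natCast]
    ring
  have hdiffp : δ ^ p - ((starRingEnd ℂ) δ) ^ p = ((2 * (C₁ : ℤ) ^ k * d : ℤ) : ℂ) * T := by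
    rw [← hδeq, hconjδp]
    push_cast
    ring
  -- the norm-power identity, independent of the representation of δ
  have hprod : (δ * (starRingEnd ℂ) δ) ^ p = (((C₁ : ℤ) * y : ℤ) : ℂ) ^ p := by
    have hyc : (C₁ : ℂ) * (x : ℂ) ^ 2 + (C₂ : ℂ) = (y : ℂ) ^ p := by exact_mod_cast heq
    have hfc : (C₁ : ℂ) * (C₂ : ℂ) = (c : ℂ) * (d : ℂ) ^ 2 := by exact_mod_cast hfact
    rw [mul_pow, ← hδeq, hconjδp]
    push_cast
    rw [hk] at hyc ⊢
    linear_combination (-((C₁ : ℂ) ^ k) ^ 2 * (d : ℂ) ^ 2) * hT2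
      + ((C₁ : ℂ) ^ k) ^ 2 * (C₁ : ℂ) * hyc - ((C₁ : ℂ) ^ k) ^ 2 * hfc
  constructor
  · -- Case 1 : δ = r + s√-c
    intro _hmod4 hrep
    have hconjδ : (starRingEnd ℂ) δ = (r : ℂ) - (s : ℂ) * T := by
      rw [hrep]
      simp only [map_add, map_mul, map_intCast, hconjT]
      ring
    have hnδ : δ * (starRingEnd ℂ) δ = ((r ^ 2 + (c : ℤ) * s ^ 2 : ℤ) : ℂ) := by
      rw [hconjδ, hrep]
      push_cast
      linear_combination (-(s : ℂ) ^ 2) * hT2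
    have hnormP : (r ^ 2 + (c : ℤ) * s ^ 2) ^ p = ((C₁ : ℤ) * y) ^ p := by
      have := hprod
      rw [hnδ] at this
      exact_mod_cast this
    have hnorm : r ^ 2 + (c : ℤ) * s ^ 2 = (C₁ : ℤ) * y :=
      (Odd.strictMono_pow (R := ℤ) hpodd).injective hnormP
    have hs : s ≠ 0 := by
      rintro rfl
      have h0 : δ ^ p - ((starRingEnd ℂ) δ) ^ p = 0 := by
        rw [hconjδ, hrep]
        push_cast
        ring
      rw [hdiffp] at h0
      rcases mul_eq_zero.mp h0 with h | h
      · have : (2 * (C₁ : ℤ) ^ k * d : ℤ) = 0 := by exact_mod_cast h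
        have hC₁kZ : (C₁ : ℤ) ^ k ≠ 0 := pow_ne_zero _ (by exact_mod_cast hC₁pos.ne')
        have hdZ : (d : ℤ) ≠ 0 := by exact_mod_cast hdpos.ne'
        exact (by positivity : (0 : ℤ) < 2 * (C₁ : ℤ) ^ k * d).ne' this
      · exact hTne h
    refine ⟨hs, ?_, ?_⟩
    · -- the ratio computation
      have hsC : (s : ℂ) ≠ 0 := Int.cast_ne_zero.mpr hs
      have e1 : α ^ p - β ^ p = 2 * (d : ℂ) * T / (Real.sqrt C₁ : ℂ) := by
        rw [hα, hβ, div_pow, div_pow, ← hδeq, hconjδp, hQp]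
        field_simp
        ring
      have e2 : α - β = 2 * (s : ℂ) * T / (Real.sqrt C₁ : ℂ) := by
        rw [hα, hβ, hconjδ, hrep]
        field_simp
        ring
      rw [e1, e2]
      field_simp
    · -- the divisibility
      obtain ⟨V, hV, hdvd⟩ := seq_dvd δ ((starRingEnd ℂ) δ) T (2 * r)
        (r ^ 2 + (c : ℤ) * s ^ 2) (2 * s)
        (by rw [hconjδ, hrep]; push_cast; ring) hnδ
        (by rw [hconjδ, hrep]; push_cast; ring) p
      have hVeq : V = 2 * (C₁ : ℤ) ^ k * d := by
        have h1 : (V : ℂ) * T = ((2 * (C₁ : ℤ) ^ k * d : ℤ) : ℂ) * T := by rw [← hV, hdiffp]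
        have h2 := mul_right_cancel₀ hTne h1
        exact_mod_cast h2
      rw [hVeq] at hdvd
      have h2 : s ∣ (C₁ : ℤ) ^ k * d := by
        have : 2 * s ∣ 2 * ((C₁ : ℤ) ^ k * d) := by rwa [← mul_assoc]
        exact (mul_dvd_mul_iff_left (two_ne_zero (α := ℤ))).mp this
      have hcpr : IsCoprime s ((C₁ : ℤ)) :=
        coprime_of_norm C₁ C₂ x y c p hC₁sqf hcop heq hp.pos 1 r s (by linarith)
          (isCoprime_one_right)
      exact (hcpr.pow_right (n := k)).dvd_of_dvd_mul_left h2
  · -- Case 2 : δ = (r + s√-c)/2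
    intro _hmod4 hrs hrep
    have hconjδ : (starRingEnd ℂ) δ = ((r : ℂ) - (s : ℂ) * T) / 2 := by
      rw [hrep]
      simp only [map_div₀, map_add, map_mul, map_intCast, hconjT, map_ofNat]
      ring
    have hnδ4 : δ * (starRingEnd ℂ) δ = ((r ^ 2 + (c : ℤ) * s ^ 2 : ℤ) : ℂ) / 4 := by
      rw [hconjδ, hrep]
      push_cast
      linear_combination (-(s : ℂ) ^ 2 / 4) * hT2
    have hnormP : (r ^ 2 + (c : ℤ) * s ^ 2) ^ p = (4 * ((C₁ : ℤ) * y)) ^ p := by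
      have h1 : (((r ^ 2 + (c : ℤ) * s ^ 2 : ℤ) : ℂ) / 4) ^ p = (((C₁ : ℤ) * y : ℤ) : ℂ) ^ p := by
        rw [← hnδ4]; exact hprod
      have h2 : ((r ^ 2 + (c : ℤ) * s ^ 2 : ℤ) : ℂ) ^ p
          = ((4 * ((C₁ : ℤ) * y) : ℤ) : ℂ) ^ p := by
        rw [div_pow] at h1
        field_simp at h1
        push_cast at h1 ⊢
        rw [mul_pow]
        linear_combination h1
      exact_mod_cast h2
    have hnorm : r ^ 2 + (c : ℤ) * s ^ 2 = 4 * ((C₁ : ℤ) * y) :=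
      (Odd.strictMono_pow (R := ℤ) hpodd).injective hnormP
    have hnδ : δ * (starRingEnd ℂ) δ = (((C₁ : ℤ) * y : ℤ) : ℂ) := by
      rw [hnδ4, hnorm]
      push_cast
      ring
    have hs : s ≠ 0 := by
      rintro rfl
      have h0 : δ ^ p - ((starRingEnd ℂ) δ) ^ p = 0 := by
        rw [hconjδ, hrep]
        push_cast
        ring
      rw [hdiffp] at h0
      rcases mul_eq_zero.mp h0 with h | h
      · have : (2 * (C₁ : ℤ) ^ k * d : ℤ) = 0 := by exact_mod_cast h
        exact (by positivity : (0 : ℤ) < 2 * (C₁ : ℤ) ^ k * d).ne' this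
      · exact hTne h
    refine ⟨hs, ?_, ?_⟩
    · have hsC : (s : ℂ) ≠ 0 := Int.cast_ne_zero.mpr hs
      have e1 : α ^ p - β ^ p = 2 * (d : ℂ) * T / (Real.sqrt C₁ : ℂ) := by
        rw [hα, hβ, div_pow, div_pow, ← hδeq, hconjδp, hQp]
        field_simp
        ring
      have e2 : α - β = (s : ℂ) * T / (Real.sqrt C₁ : ℂ) := by
        rw [hα, hβ, hconjδ, hrep]
        field_simp
        ring
      rw [e1, e2]
      field_simp
    · obtain ⟨V, hV, hdvd⟩ := seq_dvd δ ((starRingEnd ℂ) δ) T r ((C₁ : ℤ) * y) s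
        (by rw [hconjδ, hrep]; push_cast; ring) hnδ
        (by rw [hconjδ, hrep]; push_cast; ring) p
      have hVeq : V = 2 * (C₁ : ℤ) ^ k * d := by
        have h1 : (V : ℂ) * T = ((2 * (C₁ : ℤ) ^ k * d : ℤ) : ℂ) * T := by rw [← hV, hdiffp]
        have h2 := mul_right_cancel₀ hTne h1
        exact_mod_cast h2
      rw [hVeq] at hdvd
      -- hdvd : s ∣ 2 * C₁^k * d
      rcases Int.even_or_odd s with hse | hso
      · -- s even, hence r even; reduce to the integral case with r/2, s/2
        obtain ⟨b, hb⟩ := hse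
        have hre : (2 : ℤ) ∣ r := by
          have h2s : (2 : ℤ) ∣ s - r := Int.ModEq.dvd hrs
          have h2s' : (2 : ℤ) ∣ s := ⟨b, by omega⟩
          omega
        obtain ⟨a, ha⟩ := hre
        have hb' : s = 2 * b := by omega
        have hnorm' : a ^ 2 + (c : ℤ) * b ^ 2 = (C₁ : ℤ) * y := by
          have h4' : 4 * (a ^ 2 + (c : ℤ) * b ^ 2) = 4 * ((C₁ : ℤ) * y) := by
            have h5' : (2 * a) ^ 2 + (c : ℤ) * (2 * b) ^ 2 = 4 * ((C₁ : ℤ) * y) := by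
              rw [← ha, ← hb']; exact hnorm
            linear_combination h5'
          linarith [h4']
        have hcpr : IsCoprime b ((C₁ : ℤ)) :=
          coprime_of_norm C₁ C₂ x y c p hC₁sqf hcop heq hp.pos 1 a b (by linarith)
            (isCoprime_one_right)
        have hbd : b ∣ (C₁ : ℤ) ^ k * d := by
          have : 2 * b ∣ 2 * ((C₁ : ℤ) ^ k * d) := by rw [← hb', ← mul_assoc]; exact hdvd
          exact (mul_dvd_mul_iff_left (two_ne_zero (α := ℤ))).mp this
        have hbd' : b ∣ (d : ℤ) := (hcpr.pow_right (n := k)).dvd_of_dvd_mul_left hbd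
        rw [hb']
        exact mul_dvd_mul_left 2 hbd'
      · -- s odd
        have hs4 : IsCoprime s (4 : ℤ) := by
          have hs2 : IsCoprime s (2 : ℤ) := by
            rw [Int.isCoprime_iff_gcd_eq_one]
            have hnd : ¬ (2 : ℤ) ∣ s := by
              intro hdv
              obtain ⟨j, hj⟩ := hso
              omega
            have hgd : Int.gcd s 2 ∣ 2 := by
              have h := Int.gcd_dvd_right (a := s) (b := (2 : ℤ))
              exact_mod_cast h
            rcases (Nat.dvd_prime Nat.prime_two).mp hgd with h | h
            · exact h
            · exfalso
              apply hnd
              have h' : (Int.gcd s 2 : ℤ) ∣ s := Int.gcd_dvd_left _ _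
              rw [h] at h'
              exact_mod_cast h'
          have : (4 : ℤ) = 2 ^ 2 := by norm_num
          rw [this]
          exact hs2.pow_right
        have hcpr : IsCoprime s ((C₁ : ℤ)) :=
          coprime_of_norm C₁ C₂ x y c p hC₁sqf hcop heq hp.pos 4 r s hnorm hs4
        have : s ∣ (C₁ : ℤ) ^ k * (2 * d) := by
          have h : (2 : ℤ) * (C₁ : ℤ) ^ k * d = (C₁ : ℤ) ^ k * (2 * d) := by ring
          rwa [h] at hdvd
        exact (hcpr.pow_right (n := k)).dvd_of_dvd_mul_left this
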